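/- arXiv:1909.13676 — 4 statements merged into one kernel-verified Lean document; each statement's English description precedes it below -/
import Mathlib

section
/- Let F : X → ℝ be differentiable on X = ∏ᵢ Xᵢ with each Xᵢ a compact interval in ℝ₊, and suppose the gradient of F is antitone: x ⪯ y implies ∇F(x) ⪰ ∇F(y) componentwise. Then F is continuous submodular: for all x, y ∈ X, F(x ∨ y) + F(x ∧ y) ≤ F(x) + F(y), where ∨ and ∧ denote componentwise max and min. -/
/-!
Let `m = x ⊓ y` and `d = x - m ≥ 0`, so that `x = m + d` and `x ⊔ y = y + d`. Along the direction
`d`, the function `t ↦ F (y + t • d) - F (m + t • d)` has derivative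
`⟪∇F (y + t • d) - ∇F (m + t • d), d⟫ ≤ 0`, because `m ≤ y` and the gradient is antitone.
Comparing its values at `t = 1` and `t = 0` gives `F (x ⊔ y) - F x ≤ F y - F (x ⊓ y)`.
-/

open Set

theorem HasGradientAt.hasDerivAt_add_smul {E : Type*} [NormedAddCommGroup E]
    [InnerProductSpace ℝ E] [CompleteSpace E] {F : E → ℝ} {g p d : E} {t : ℝ}
    (h : HasGradientAt F g (p + t • d)) :
    HasDerivAt (fun s : ℝ => F (p + s • d)) (inner ℝ g d) t := by
  have hline : HasDerivAt (fun s : ℝ => p + s • d) d t := by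
    simpa using ((hasDerivAt_id t).smul_const d).const_add p
  simpa [Function.comp_def] using h.hasFDerivAt.comp_hasDerivAt t hline

section EuclideanSpace

variable {ι : Type*}

theorem EuclideanSpace.inner_le_inner_of_le_of_nonneg [Fintype ι] {u v d : EuclideanSpace ℝ ι}
    (huv : ∀ i, u i ≤ v i) (hd : ∀ i, 0 ≤ d i) : inner ℝ u d ≤ inner ℝ v d := by
  simp only [PiLp.inner_apply, RCLike.inner_apply, conj_trivial]
  exact Finset.sum_le_sum fun i _ => mul_le_mul_of_nonneg_left (huv i) (hd i)

theorem add_sub_le_add_sub_of_antitone_gradient [Fintype ι] {S : Set (EuclideanSpace ℝ ι)}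
    (hS : Convex ℝ S) {F : EuclideanSpace ℝ ι → ℝ} (hdiff : ∀ x ∈ S, DifferentiableAt ℝ F x)
    (hanti : ∀ x ∈ S, ∀ y ∈ S, (∀ i, x i ≤ y i) → ∀ i, gradient F y i ≤ gradient F x i)
    {p q d : EuclideanSpace ℝ ι} (hpq : ∀ i, p i ≤ q i) (hd : ∀ i, 0 ≤ d i)
    (hp : p ∈ S) (hpd : p + d ∈ S) (hq : q ∈ S) (hqd : q + d ∈ S) :
    F (q + d) - F q ≤ F (p + d) - F p := by
  have hderiv : ∀ t ∈ Icc (0 : ℝ) 1,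
      HasDerivAt (fun s => F (q + s • d) - F (p + s • d))
        (inner ℝ (gradient F (q + t • d)) d - inner ℝ (gradient F (p + t • d)) d) t :=
    fun t ht =>
      (hdiff _ (hS.add_smul_mem hq hqd ht)).hasGradientAt.hasDerivAt_add_smul.sub
        (hdiff _ (hS.add_smul_mem hp hpd ht)).hasGradientAt.hasDerivAt_add_smul
  have hmono : AntitoneOn (fun s : ℝ => F (q + s • d) - F (p + s • d)) (Icc 0 1) := by
    refine antitoneOn_of_deriv_nonpos (convex_Icc 0 1)
      (fun t ht => (hderiv t ht).continuousAt.continuousWithinAt) ?_ ?_ <;>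
      rw [interior_Icc]
    · exact fun t ht => (hderiv t (Ioo_subset_Icc_self ht)).differentiableAt.differentiableWithinAt
    · intro t ht
      have ht' := Ioo_subset_Icc_self ht
      rw [(hderiv t ht').deriv, sub_nonpos]
      refine EuclideanSpace.inner_le_inner_of_le_of_nonneg
        (hanti _ (hS.add_smul_mem hp hpd ht') _ (hS.add_smul_mem hq hqd ht') fun i => ?_) hd
      simpa using hpq i
  have := hmono (left_mem_Icc.2 zero_le_one) (right_mem_Icc.2 zero_le_one) zero_le_one
  simp only [zero_smul, add_zero, one_smul] at this
  linarith

theorem convex_setOf_forall_mem_Icc (a b : ι → ℝ) :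
    Convex ℝ {x : EuclideanSpace ℝ ι | ∀ i, x i ∈ Icc (a i) (b i)} := by
  intro x hx y hy s t hs ht hst i
  simp only [PiLp.add_apply, PiLp.smul_apply, smul_eq_mul]
  exact (convex_Icc (a i) (b i)) (hx i) (hy i) hs ht hst

end EuclideanSpace

theorem stmt2_general {n : ℕ} (a b : Fin n → ℝ)
    (F : EuclideanSpace ℝ (Fin n) → ℝ)
    (X : Set (EuclideanSpace ℝ (Fin n)))
    (hX : X = {x : EuclideanSpace ℝ (Fin n) | ∀ i, x i ∈ Set.Icc (a i) (b i)})
    (hdiff : ∀ x ∈ X, DifferentiableAt ℝ F x)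
    (hanti : ∀ x ∈ X, ∀ y ∈ X, (∀ i, x i ≤ y i) →
      ∀ i, gradient F y i ≤ gradient F x i) :
    ∀ x ∈ X, ∀ y ∈ X,
      F ((WithLp.equiv 2 (Fin n → ℝ)).symm (fun i => max (x i) (y i))) +
      F ((WithLp.equiv 2 (Fin n → ℝ)).symm (fun i => min (x i) (y i))) ≤
      F x + F y := by
  intro x hx y hy
  subst hX
  set m := (WithLp.equiv 2 (Fin n → ℝ)).symm (fun i => min (x i) (y i))
  have hm : ∀ i, m i = min (x i) (y i) := fun i => rfl
  have hsup : (WithLp.equiv 2 (Fin n → ℝ)).symm (fun i => max (x i) (y i)) = y + (x - m) := by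
    ext i
    simp only [WithLp.equiv_symm_apply, PiLp.toLp_apply, PiLp.add_apply, PiLp.sub_apply, hm]
    linarith [min_add_max (x i) (y i)]
  have hm_mem : m ∈ {x : EuclideanSpace ℝ (Fin n) | ∀ i, x i ∈ Icc (a i) (b i)} :=
    fun i => ⟨le_min (hx i).1 (hy i).1, (min_le_left _ _).trans (hx i).2⟩
  have hsup_mem : y + (x - m) ∈ {x : EuclideanSpace ℝ (Fin n) | ∀ i, x i ∈ Icc (a i) (b i)} :=
    hsup ▸ fun i => ⟨(hy i).1.trans (le_max_right _ _), max_le (hx i).2 (hy i).2⟩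
  have key := add_sub_le_add_sub_of_antitone_gradient (convex_setOf_forall_mem_Icc a b) hdiff
    hanti (fun i => (hm i).trans_le (min_le_right _ _)) (fun i => by simp [hm]) hm_mem
    (by simpa using hx) hy hsup_mem
  rw [add_sub_cancel] at key
  rw [hsup]
  linarith

theorem stmt2 {n : ℕ} (a b : Fin n → ℝ)
    (ha : ∀ i, 0 ≤ a i) (hab : ∀ i, a i ≤ b i)
    (F : EuclideanSpace ℝ (Fin n) → ℝ)
    (X : Set (EuclideanSpace ℝ (Fin n)))
    (hX : X = {x : EuclideanSpace ℝ (Fin n) | ∀ i, x i ∈ Set.Icc (a i) (b i)})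
    (hdiff : ∀ x ∈ X, DifferentiableAt ℝ F x)
    (hanti : ∀ x ∈ X, ∀ y ∈ X, (∀ i, x i ≤ y i) →
      ∀ i, gradient F y i ≤ gradient F x i) :
    ∀ x ∈ X, ∀ y ∈ X,
      F ((WithLp.equiv 2 (Fin n → ℝ)).symm (fun i => max (x i) (y i))) +
      F ((WithLp.equiv 2 (Fin n → ℝ)).symm (fun i => min (x i) (y i))) ≤
      F x + F y :=
  stmt2_general a b F X hX hdiff hanti
end

section
/- Let f : 2^Y → ℝ be a submodular set function on a finite set Y with |Y| = p, and let F : [0,1]^p → ℝ be its multilinear extension F(y) = Σ_{S ⊆ Y} f(S) ∏_{i∈S} yᵢ ∏_{j∉S} (1−yⱼ). Then for each coordinate i, the partial derivative ∂F/∂yᵢ is nonincreasing in every coordinate yⱼ, i.e., ∇F is antitone: x ⪯ y componentwise implies ∇F(x) ⪰ ∇F(y) componentwise. -/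
/-- The multilinear extension of a set function `f : 2^{[p]} → ℝ`. -/
def multilinearExt {p : ℕ} (f : Finset (Fin p) → ℝ) (y : Fin p → ℝ) : ℝ :=
  ∑ S : Finset (Fin p), f S * ((∏ i ∈ S, y i) * ∏ j ∈ Sᶜ, (1 - y j))

namespace StmtAux

open Finset

variable {p : ℕ}

/-- Multilinear extension relative to a ground set `T`. -/
def mext (f : Finset (Fin p) → ℝ) (T : Finset (Fin p)) (z : Fin p → ℝ) : ℝ :=
  ∑ S ∈ T.powerset, f S * ((∏ j ∈ S, z j) * ∏ j ∈ T \ S, (1 - z j))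

lemma multilinearExt_eq_mext (f : Finset (Fin p) → ℝ) (z : Fin p → ℝ) :
    multilinearExt f z = mext f Finset.univ z := by
  unfold multilinearExt mext
  rw [Finset.powerset_univ]
  refine Finset.sum_congr rfl fun S _ => ?_
  rw [Finset.compl_eq_univ_sdiff]

lemma mext_empty (f : Finset (Fin p) → ℝ) (z : Fin p → ℝ) : mext f ∅ z = f ∅ := by
  simp [mext]

lemma mext_decomp (f : Finset (Fin p) → ℝ) {T : Finset (Fin p)} {i : Fin p} (hi : i ∉ T)
    (z : Fin p → ℝ) :
    mext f (insert i T) z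
      = (1 - z i) * mext f T z + z i * mext (fun S => f (insert i S)) T z := by
  unfold mext
  rw [Finset.sum_powerset_insert hi]
  congr 1
  · rw [Finset.mul_sum]
    refine Finset.sum_congr rfl fun S hS => ?_
    rw [Finset.mem_powerset] at hS
    have hiS : i ∉ S := fun h => hi (hS h)
    have : insert i T \ S = insert i (T \ S) := by
      ext j
      simp only [Finset.mem_sdiff, Finset.mem_insert]
      constructor
      · rintro ⟨h1 | h1, h2⟩
        · exact Or.inl h1
        · exact Or.inr ⟨h1, h2⟩
      · rintro (rfl | ⟨h1, h2⟩)
        · exact ⟨Or.inl rfl, hiS⟩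
        · exact ⟨Or.inr h1, h2⟩
    rw [this, Finset.prod_insert (fun h => hi (Finset.mem_sdiff.1 h).1)]
    ring
  · rw [Finset.mul_sum]
    refine Finset.sum_congr rfl fun S hS => ?_
    rw [Finset.mem_powerset] at hS
    have hiS : i ∉ S := fun h => hi (hS h)
    have h1 : insert i T \ insert i S = T \ S := by
      ext j
      simp only [Finset.mem_sdiff, Finset.mem_insert, not_or]
      constructor
      · rintro ⟨h1 | h1, h2, h3⟩
        · exact absurd h1 h2
        · exact ⟨h1, h3⟩
      · rintro ⟨h1, h2⟩
        exact ⟨Or.inr h1, fun h => hi (h ▸ h1), h2⟩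
    rw [h1, Finset.prod_insert hiS]
    ring

lemma mext_mono_f {f g : Finset (Fin p) → ℝ} {T : Finset (Fin p)} {z : Fin p → ℝ}
    (hz : ∀ j, z j ∈ Set.Icc (0 : ℝ) 1)
    (hfg : ∀ S ∈ T.powerset, f S ≤ g S) :
    mext f T z ≤ mext g T z := by
  refine Finset.sum_le_sum fun S hS => ?_
  refine mul_le_mul_of_nonneg_right (hfg S hS) ?_
  refine mul_nonneg (Finset.prod_nonneg fun j _ => (hz j).1) ?_
  exact Finset.prod_nonneg fun j _ => by linarith [(hz j).2]

/-- The key monotonicity lemma: if `f` decreases under inserting elements,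
then `mext f T` is coordinatewise antitone on `[0,1]^p`. -/
lemma mext_antitone (f : Finset (Fin p) → ℝ) (T : Finset (Fin p))
    (hf : ∀ j ∈ T, ∀ S ⊆ T.erase j, f (insert j S) ≤ f S)
    {x y : Fin p → ℝ}
    (hx : ∀ j, x j ∈ Set.Icc (0 : ℝ) 1) (hy : ∀ j, y j ∈ Set.Icc (0 : ℝ) 1)
    (hxy : ∀ j, x j ≤ y j) :
    mext f T y ≤ mext f T x := by
  induction T using Finset.induction_on generalizing f with
  | empty => simp [mext_empty]
  | @insert i T hiT ih =>
    rw [mext_decomp f hiT, mext_decomp f hiT]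
    have hA : mext f T y ≤ mext f T x := by
      refine ih f fun j hj S hS => ?_
      refine hf j (Finset.mem_insert_of_mem hj) S (hS.trans ?_)
      exact Finset.erase_subset_erase j (Finset.subset_insert i T)
    have hB : mext (fun S => f (insert i S)) T y ≤ mext (fun S => f (insert i S)) T x := by
      refine ih _ fun j hj S hS => ?_
      have hij : i ≠ j := fun h => hiT (h ▸ hj)
      have h1 : insert i S ⊆ (insert i T).erase j := by
        intro a ha
        rcases Finset.mem_insert.1 ha with rfl | ha
        · exact Finset.mem_erase.2 ⟨hij, Finset.mem_insert_self _ _⟩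
        · have := hS ha
          rw [Finset.mem_erase] at this
          exact Finset.mem_erase.2 ⟨this.1, Finset.mem_insert_of_mem this.2⟩
      have := hf j (Finset.mem_insert_of_mem hj) (insert i S) h1
      simpa [Finset.insert_comm] using this
    have hBA : mext (fun S => f (insert i S)) T x ≤ mext f T x := by
      refine mext_mono_f hx fun S hS => ?_
      refine hf i (Finset.mem_insert_self _ _) S ?_
      rw [Finset.erase_insert hiT]
      exact Finset.mem_powerset.1 hS
    have h0x := (hx i).1; have h1x := (hx i).2
    have h0y := (hy i).1; have h1y := (hy i).2
    have hxyi := hxy i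
    nlinarith [mul_nonneg (sub_nonneg.2 h1y) (sub_nonneg.2 hA),
      mul_nonneg h0y (sub_nonneg.2 hB),
      mul_nonneg (sub_nonneg.2 hxyi) (sub_nonneg.2 hBA)]

/-- `mext f T` does not depend on coordinates outside `T`. -/
lemma mext_congr (f : Finset (Fin p) → ℝ) (T : Finset (Fin p)) {z w : Fin p → ℝ}
    (h : ∀ j ∈ T, z j = w j) : mext f T z = mext f T w := by
  refine Finset.sum_congr rfl fun S hS => ?_
  rw [Finset.mem_powerset] at hS
  congr 1
  congr 1
  · exact Finset.prod_congr rfl fun j hj => h j (hS hj)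
  · exact Finset.prod_congr rfl fun j hj => by rw [h j (Finset.mem_sdiff.1 hj).1]

/-- The discrete derivative function. -/
noncomputable def dslope (f : Finset (Fin p) → ℝ) (i : Fin p) (z : Fin p → ℝ) : ℝ :=
  mext (fun S => f (insert i S)) (Finset.univ.erase i) z - mext f (Finset.univ.erase i) z

lemma multilinearExt_line (f : Finset (Fin p) → ℝ) (i : Fin p) (z : Fin p → ℝ) (t : ℝ) :
    multilinearExt f (Function.update z i (z i + t))
      = multilinearExt f z + t * dslope f i z := by
  have hins : insert i (Finset.univ.erase i) = Finset.univ := by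
    rw [Finset.insert_erase (Finset.mem_univ i)]
  have hmem : i ∉ Finset.univ.erase i := Finset.notMem_erase i _
  have key : ∀ w : Fin p → ℝ,
      multilinearExt f w = (1 - w i) * mext f (Finset.univ.erase i) w
        + w i * mext (fun S => f (insert i S)) (Finset.univ.erase i) w := by
    intro w
    rw [multilinearExt_eq_mext]
    conv_lhs => rw [← hins]
    rw [mext_decomp f hmem]
  have hup : ∀ g : Finset (Fin p) → ℝ,
      mext g (Finset.univ.erase i) (Function.update z i (z i + t))
        = mext g (Finset.univ.erase i) z := by
    intro g
    refine mext_congr g _ fun j hj => ?_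
    exact Function.update_of_ne (Finset.mem_erase.1 hj).1 _ z
  rw [key, key, hup, hup, Function.update_self]
  unfold dslope
  ring

lemma differentiable_multilinearExt (f : Finset (Fin p) → ℝ) :
    Differentiable ℝ (fun z : EuclideanSpace ℝ (Fin p) => multilinearExt f (fun i => z i)) := by
  unfold multilinearExt
  intro z
  refine DifferentiableAt.fun_sum fun S _ => ?_
  refine DifferentiableAt.const_mul ?_ _
  refine DifferentiableAt.mul ?_ ?_
  · exact (HasFDerivAt.finset_prod fun j _ =>
      (EuclideanSpace.proj (𝕜 := ℝ) j).hasFDerivAt).differentiableAt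
  · exact (HasFDerivAt.finset_prod fun j _ =>
      (hasFDerivAt_const (1:ℝ) z).sub (EuclideanSpace.proj (𝕜 := ℝ) j).hasFDerivAt).differentiableAt

lemma gradient_eq_dslope (f : Finset (Fin p) → ℝ)
    (F : EuclideanSpace ℝ (Fin p) → ℝ)
    (hF : F = fun z : EuclideanSpace ℝ (Fin p) => multilinearExt f (fun i => z i))
    (z : EuclideanSpace ℝ (Fin p)) (i : Fin p) :
    gradient F z i = dslope f i (fun j => z j) := by
  have hdiff : Differentiable ℝ F := hF ▸ differentiable_multilinearExt f
  set v : EuclideanSpace ℝ (Fin p) := EuclideanSpace.single i 1 with hv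
  -- gradient coordinate = directional derivative
  have hgrad : gradient F z i = fderiv ℝ F z v := by
    have : fderiv ℝ F z v = @inner ℝ _ _ (gradient F z) v := by
      rw [gradient]
      simp
    rw [this, hv, EuclideanSpace.inner_single_right]
    simp
  rw [hgrad]
  -- compute the directional derivative along the line t ↦ z + t • v
  have hline : HasDerivAt (fun t : ℝ => z + t • v) v 0 := by
    simpa using ((hasDerivAt_id (0 : ℝ)).smul_const v).const_add z
  have hcomp : HasDerivAt (fun t : ℝ => F (z + t • v)) (fderiv ℝ F z v) 0 := by
    have h1 : HasFDerivAt F (fderiv ℝ F z) (z + (0 : ℝ) • v) := by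
      simpa using (hdiff (z + (0 : ℝ) • v)).hasFDerivAt
    exact h1.comp_hasDerivAt 0 hline
  have heq : ∀ t : ℝ, F (z + t • v) = F z + t * dslope f i (fun j => z j) := by
    intro t
    have hcoord : (fun j => (z + t • v) j) = Function.update (fun j => z j) i (z i + t) := by
      funext j
      by_cases hj : j = i
      · subst hj
        simp [hv, EuclideanSpace.single_apply]
      · simp [hv, Function.update_of_ne hj, EuclideanSpace.single_apply, hj]
    rw [hF]
    simp only
    rw [hcoord, multilinearExt_line]
  have hcomp2 : HasDerivAt (fun t : ℝ => F (z + t • v)) (dslope f i (fun j => z j)) 0 := by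
    have hfun : (fun t : ℝ => F (z + t • v))
        = fun t : ℝ => F z + t * dslope f i (fun j => z j) := funext heq
    rw [hfun]
    exact (hasDerivAt_mul_const _).const_add _
  exact hcomp.unique hcomp2

end StmtAux

theorem stmt4 {p : ℕ} (f : Finset (Fin p) → ℝ)
    (hsub : ∀ A B : Finset (Fin p), f (A ∩ B) + f (A ∪ B) ≤ f A + f B)
    (F : EuclideanSpace ℝ (Fin p) → ℝ)
    (hF : F = fun z : EuclideanSpace ℝ (Fin p) => multilinearExt f (fun i => z i)) :
    ∀ x y : EuclideanSpace ℝ (Fin p),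
      (∀ i, x i ∈ Set.Icc (0 : ℝ) 1) → (∀ i, y i ∈ Set.Icc (0 : ℝ) 1) →
      (∀ i, x i ≤ y i) →
      ∀ i, gradient F y i ≤ gradient F x i := by
  intro x y hx hy hxy i
  rw [StmtAux.gradient_eq_dslope f F hF, StmtAux.gradient_eq_dslope f F hF]
  unfold StmtAux.dslope
  have hg : ∀ j ∈ Finset.univ.erase i, ∀ S ⊆ (Finset.univ.erase i).erase j,
      (fun S => f (insert i S) - f S) (insert j S) ≤ (fun S => f (insert i S) - f S) S := by
    intro j hj S hS
    simp only
    have hji : j ≠ i := (Finset.mem_erase.1 hj).1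
    have hjS : j ∉ S := fun h => (Finset.mem_erase.1 (hS h)).1 rfl
    have hiS : i ∉ S := fun h => (Finset.mem_erase.1 (Finset.erase_subset j _ (hS h))).1 rfl
    have h1 : (insert i S) ∩ (insert j S) = S := by
      ext a
      simp only [Finset.mem_inter, Finset.mem_insert]
      constructor
      · rintro ⟨rfl | ha, h2 | h2⟩
        · exact absurd h2.symm hji
        · exact h2
        · exact ha
        · exact ha
      · intro ha; exact ⟨Or.inr ha, Or.inr ha⟩
    have h2 : (insert i S) ∪ (insert j S) = insert i (insert j S) := by
      ext a
      simp only [Finset.mem_union, Finset.mem_insert]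
      tauto
    have := hsub (insert i S) (insert j S)
    rw [h1, h2] at this
    linarith
  have key := StmtAux.mext_antitone (fun S => f (insert i S) - f S) (Finset.univ.erase i) hg
    (x := fun j => x j) (y := fun j => y j) hx hy hxy
  have hsplit : ∀ z : Fin p → ℝ,
      StmtAux.mext (fun S => f (insert i S)) (Finset.univ.erase i) z
        - StmtAux.mext f (Finset.univ.erase i) z
      = StmtAux.mext (fun S => f (insert i S) - f S) (Finset.univ.erase i) z := by
    intro z
    unfold StmtAux.mext
    rw [← Finset.sum_sub_distrib]
    refine Finset.sum_congr rfl fun S _ => by ring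
  rw [hsplit, hsplit]
  exact key
end

section
/- Let f : 2^Y → ℝ be monotone submodular with f(∅) = 0, and let F be its multilinear extension on [0,1]^p. Then for any x, y ∈ [0,1]^p, ⟨∇F(x), (y ∨ x) − x⟩ ≥ F(y ∨ x) − F(x), and in particular ⟨∇F(x), y⟩ ≥ F(y ∨ x) − F(x) ≥ F(y) − F(x). -/
open scoped RealInnerProductSpace

namespace Stmt5Aux

variable {p : ℕ}

/-- The factor associated to coordinate `k` for subset `S`. -/
noncomputable def fac (S : Finset (Fin p)) (w : Fin p → ℝ) (k : Fin p) : ℝ :=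
  if k ∈ S then w k else 1 - w k

/-- Reformulated multilinear extension. -/
noncomputable def ML (f : Finset (Fin p) → ℝ) (w : Fin p → ℝ) : ℝ :=
  ∑ S : Finset (Fin p), f S * ∏ k, fac S w k

/-- The `i`-th partial derivative (= marginal) of the multilinear extension. -/
noncomputable def Dp (f : Finset (Fin p) → ℝ) (i : Fin p) (w : Fin p → ℝ) : ℝ :=
  ∑ S : Finset (Fin p), f S * ((if i ∈ S then (1:ℝ) else -1) *
    ∏ k ∈ Finset.univ.erase i, fac S w k)

/-- The mixed second partial derivative. -/
noncomputable def Dp2 (f : Finset (Fin p) → ℝ) (i j : Fin p) (w : Fin p → ℝ) : ℝ :=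
  ∑ S : Finset (Fin p), f S * ((if i ∈ S then (1:ℝ) else -1) *
    ((if j ∈ S then (1:ℝ) else -1) * ∏ k ∈ (Finset.univ.erase i).erase j, fac S w k))

lemma prod_fac (S : Finset (Fin p)) (w : Fin p → ℝ) :
    ∏ k, fac S w k = (∏ i ∈ S, w i) * ∏ j ∈ Sᶜ, (1 - w j) := by
  rw [← Finset.prod_mul_prod_compl S (fac S w)]
  congr 1
  · exact Finset.prod_congr rfl fun k hk => if_pos hk
  · exact Finset.prod_congr rfl fun k hk => if_neg (by simpa using hk)

lemma ML_eq (f : Finset (Fin p) → ℝ) (w : Fin p → ℝ) :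
    multilinearExt f w = ML f w := by
  unfold multilinearExt ML
  exact Finset.sum_congr rfl fun S _ => by rw [prod_fac]

lemma fac_update_ne (S : Finset (Fin p)) (w : Fin p → ℝ) {i k : Fin p} (h : k ≠ i)
    (t : ℝ) : fac S (Function.update w i t) k = fac S w k := by
  simp [fac, Function.update_of_ne h]

lemma fac_nonneg (S : Finset (Fin p)) {w : Fin p → ℝ}
    (hw : ∀ k, w k ∈ Set.Icc (0:ℝ) 1) (k : Fin p) : 0 ≤ fac S w k := by
  unfold fac
  split
  · exact (hw k).1
  · linarith [(hw k).2]

lemma fac_insert_ne (S : Finset (Fin p)) (w : Fin p → ℝ) {i k : Fin p} (h : k ≠ i) :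
    fac (insert i S) w k = fac S w k := by
  simp [fac, Finset.mem_insert, h]

lemma ML_update (f : Finset (Fin p) → ℝ) (i : Fin p) (w : Fin p → ℝ) (t : ℝ) :
    ML f (Function.update w i t) = ML f (Function.update w i 0) + t * Dp f i w := by
  unfold ML Dp
  rw [Finset.mul_sum, ← Finset.sum_add_distrib]
  refine Finset.sum_congr rfl fun S _ => ?_
  have h1 : ∀ t : ℝ, ∏ k, fac S (Function.update w i t) k
      = (if i ∈ S then t else 1 - t) * ∏ k ∈ Finset.univ.erase i, fac S w k := by
    intro t
    rw [← Finset.mul_prod_erase Finset.univ _ (Finset.mem_univ i)]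
    congr 1
    · simp [fac]
    · exact Finset.prod_congr rfl fun k hk => fac_update_ne S w (Finset.ne_of_mem_erase hk) t
  rw [h1, h1]
  by_cases hi : i ∈ S <;> simp [hi] <;> ring

lemma ML_update_sub (f : Finset (Fin p) → ℝ) (i : Fin p) (w : Fin p → ℝ) (s t : ℝ) :
    ML f (Function.update w i t) - ML f (Function.update w i s) = (t - s) * Dp f i w := by
  rw [ML_update f i w t, ML_update f i w s]; ring

lemma Dp_update_self (f : Finset (Fin p) → ℝ) (i : Fin p) (w : Fin p → ℝ) (t : ℝ) :
    Dp f i (Function.update w i t) = Dp f i w := by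
  unfold Dp
  refine Finset.sum_congr rfl fun S _ => ?_
  congr 2
  exact Finset.prod_congr rfl fun k hk => fac_update_ne S w (Finset.ne_of_mem_erase hk) t

lemma Dp_update (f : Finset (Fin p) → ℝ) (i j : Fin p) (hij : j ≠ i) (w : Fin p → ℝ)
    (t : ℝ) :
    Dp f i (Function.update w j t) = Dp f i (Function.update w j 0) + t * Dp2 f i j w := by
  unfold Dp Dp2
  rw [Finset.mul_sum, ← Finset.sum_add_distrib]
  refine Finset.sum_congr rfl fun S _ => ?_
  have hj : j ∈ Finset.univ.erase i := Finset.mem_erase.mpr ⟨hij, Finset.mem_univ j⟩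
  have h1 : ∀ t : ℝ, ∏ k ∈ Finset.univ.erase i, fac S (Function.update w j t) k
      = (if j ∈ S then t else 1 - t) * ∏ k ∈ (Finset.univ.erase i).erase j, fac S w k := by
    intro t
    rw [← Finset.mul_prod_erase _ _ hj]
    congr 1
    · simp [fac]
    · exact Finset.prod_congr rfl fun k hk =>
        fac_update_ne S w (Finset.ne_of_mem_erase hk) t
  rw [h1, h1]
  by_cases hjS : j ∈ S <;> by_cases hiS : i ∈ S <;> simp [hjS, hiS] <;> ring

lemma Dp_update_sub (f : Finset (Fin p) → ℝ) (i j : Fin p) (hij : j ≠ i)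
    (w : Fin p → ℝ) (s t : ℝ) :
    Dp f i (Function.update w j t) - Dp f i (Function.update w j s)
      = (t - s) * Dp2 f i j w := by
  rw [Dp_update f i j hij w t, Dp_update f i j hij w s]; ring

/-- Splitting a sum over a family of subsets according to membership of `i`. -/
lemma sum_split (i : Fin p) (s : Finset (Finset (Fin p)))
    (hins : ∀ S ∈ s, i ∉ S → insert i S ∈ s)
    (hers : ∀ S ∈ s, S.erase i ∈ s)
    (g : Finset (Fin p) → ℝ) :
    ∑ S ∈ s, g S = ∑ S ∈ s.filter (fun S => i ∉ S), (g S + g (insert i S)) := by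
  have hre : ∑ S ∈ s.filter (fun S => ¬ i ∉ S), g S
      = ∑ S ∈ s.filter (fun S => i ∉ S), g (insert i S) := by
    refine Finset.sum_bij' (fun S _ => S.erase i) (fun S _ => insert i S) ?_ ?_ ?_ ?_ ?_
    · intro S hS
      simp only [Finset.mem_filter, not_not] at hS ⊢
      exact ⟨hers S hS.1, Finset.notMem_erase i S⟩
    · intro S hS
      simp only [Finset.mem_filter, not_not] at hS ⊢
      exact ⟨hins S hS.1 hS.2, Finset.mem_insert_self i S⟩
    · intro S hS
      simp only [Finset.mem_filter, not_not] at hS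
      exact Finset.insert_erase hS.2
    · intro S hS
      simp only [Finset.mem_filter] at hS
      exact Finset.erase_insert hS.2
    · intro S hS
      simp only [Finset.mem_filter, not_not] at hS
      show g S = g (insert i (S.erase i))
      rw [Finset.insert_erase hS.2]
  rw [← Finset.sum_filter_add_sum_filter_not s (fun S => i ∉ S) g, hre,
    ← Finset.sum_add_distrib]

lemma Dp_nonneg (f : Finset (Fin p) → ℝ)
    (hmono : ∀ A B : Finset (Fin p), A ⊆ B → f A ≤ f B)
    (i : Fin p) {w : Fin p → ℝ} (hw : ∀ k, w k ∈ Set.Icc (0:ℝ) 1) :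
    0 ≤ Dp f i w := by
  unfold Dp
  rw [show (Finset.univ : Finset (Finset (Fin p))) =
      Finset.univ from rfl,
    sum_split i Finset.univ (fun _ _ _ => Finset.mem_univ _) (fun _ _ => Finset.mem_univ _)]
  refine Finset.sum_nonneg fun S hS => ?_
  have hiS : i ∉ S := (Finset.mem_filter.mp hS).2
  have hA : ∏ k ∈ Finset.univ.erase i, fac (insert i S) w k
      = ∏ k ∈ Finset.univ.erase i, fac S w k :=
    Finset.prod_congr rfl fun k hk => fac_insert_ne S w (Finset.ne_of_mem_erase hk)
  have hA0 : 0 ≤ ∏ k ∈ Finset.univ.erase i, fac S w k :=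
    Finset.prod_nonneg fun k _ => fac_nonneg S hw k
  rw [hA, if_neg hiS, if_pos (Finset.mem_insert_self i S)]
  have hle : f S ≤ f (insert i S) := hmono S (insert i S) (Finset.subset_insert i S)
  nlinarith

lemma Dp2_nonpos (f : Finset (Fin p) → ℝ)
    (hsub : ∀ A B : Finset (Fin p), f (A ∩ B) + f (A ∪ B) ≤ f A + f B)
    (i j : Fin p) (hij : j ≠ i) {w : Fin p → ℝ} (hw : ∀ k, w k ∈ Set.Icc (0:ℝ) 1) :
    Dp2 f i j w ≤ 0 := by
  unfold Dp2
  rw [sum_split i Finset.univ (fun _ _ _ => Finset.mem_univ _) (fun _ _ => Finset.mem_univ _)]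
  rw [sum_split j (Finset.univ.filter (fun S => i ∉ S))
    (by
      intro S hS hjS
      simp only [Finset.mem_filter, Finset.mem_univ, true_and] at hS ⊢
      simp [Finset.mem_insert, hS, Ne.symm hij])
    (by
      intro S hS
      simp only [Finset.mem_filter, Finset.mem_univ, true_and] at hS ⊢
      simp [Finset.mem_erase, hS])]
  refine Finset.sum_nonpos fun S hS => ?_
  simp only [Finset.mem_filter, Finset.mem_univ, true_and] at hS
  obtain ⟨hiS, hjS⟩ := hS
  have hiins : i ∉ insert j S := by simp [Finset.mem_insert, hiS, hij.symm]
  -- the common product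
  set A := ∏ k ∈ (Finset.univ.erase i).erase j, fac S w k with hAdef
  have hprod : ∀ T : Finset (Fin p), (T = S ∨ T = insert i S ∨ T = insert j S ∨
      T = insert i (insert j S)) →
      ∏ k ∈ (Finset.univ.erase i).erase j, fac T w k = A := by
    intro T hT
    refine Finset.prod_congr rfl fun k hk => ?_
    have hki : k ≠ i := Finset.ne_of_mem_erase (Finset.mem_of_mem_erase hk)
    have hkj : k ≠ j := Finset.ne_of_mem_erase hk
    rcases hT with rfl | rfl | rfl | rfl
    · rfl
    · exact fac_insert_ne S w hki
    · exact fac_insert_ne S w hkj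
    · rw [fac_insert_ne _ w hki, fac_insert_ne S w hkj]
  have hA0 : 0 ≤ A := Finset.prod_nonneg fun k _ => fac_nonneg S hw k
  have e1 : ∏ k ∈ (Finset.univ.erase i).erase j, fac (insert i S) w k = A :=
    hprod _ (Or.inr (Or.inl rfl))
  have e2 : ∏ k ∈ (Finset.univ.erase i).erase j, fac (insert j S) w k = A :=
    hprod _ (Or.inr (Or.inr (Or.inl rfl)))
  have e3 : ∏ k ∈ (Finset.univ.erase i).erase j, fac (insert i (insert j S)) w k = A :=
    hprod _ (Or.inr (Or.inr (Or.inr rfl)))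
  have hsub' : f ((insert i S) ∩ (insert j S)) + f ((insert i S) ∪ (insert j S))
      ≤ f (insert i S) + f (insert j S) := hsub _ _
  have hcap : (insert i S) ∩ (insert j S) = S := by
    ext a
    simp only [Finset.mem_inter, Finset.mem_insert]
    constructor
    · rintro ⟨h1 | h1, h2 | h2⟩
      · exact absurd (h2.symm.trans h1) hij
      · exact h2
      · exact h1
      · exact h1
    · exact fun h => ⟨Or.inr h, Or.inr h⟩
  have hcup : (insert i S) ∪ (insert j S) = insert i (insert j S) := by
    ext a
    simp only [Finset.mem_union, Finset.mem_insert]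
    tauto
  rw [hcap, hcup] at hsub'
  rw [e1, e2, e3, if_neg hiS, if_neg hjS, if_pos (Finset.mem_insert_self i S),
    if_neg (by simp [Finset.mem_insert, hjS, hij]),
    if_neg hiins, if_pos (Finset.mem_insert_self j S),
    if_pos (Finset.mem_insert_self i _),
    if_pos (Finset.mem_insert_of_mem (Finset.mem_insert_self j S))]
  nlinarith

/-- Hybrid vector: coordinates in `T` taken from `v`, others from `u`. -/
noncomputable def hyb (u v : Fin p → ℝ) (T : Finset (Fin p)) (k : Fin p) : ℝ :=
  if k ∈ T then v k else u k

lemma hyb_empty (u v : Fin p → ℝ) : hyb u v ∅ = u := by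
  funext k; simp [hyb]

lemma hyb_univ (u v : Fin p → ℝ) : hyb u v Finset.univ = v := by
  funext k; simp [hyb]

lemma hyb_insert (u v : Fin p → ℝ) (T : Finset (Fin p)) {j : Fin p} (hj : j ∉ T) :
    hyb u v (insert j T) = Function.update (hyb u v T) j (v j) := by
  funext k
  by_cases hk : k = j
  · subst hk; simp [hyb]
  · simp [hyb, Function.update_of_ne hk, Finset.mem_insert, hk]

lemma hyb_self_update (u v : Fin p → ℝ) (T : Finset (Fin p)) {j : Fin p} (hj : j ∉ T) :
    hyb u v T = Function.update (hyb u v T) j (u j) := by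
  have : u j = hyb u v T j := by simp [hyb, hj]
  rw [this, Function.update_eq_self]

lemma hyb_Icc {u v : Fin p → ℝ} (hu : ∀ k, u k ∈ Set.Icc (0:ℝ) 1)
    (hv : ∀ k, v k ∈ Set.Icc (0:ℝ) 1) (T : Finset (Fin p)) :
    ∀ k, hyb u v T k ∈ Set.Icc (0:ℝ) 1 := by
  intro k; unfold hyb; split
  · exact hv k
  · exact hu k

lemma hyb_le {u v : Fin p → ℝ} (huv : ∀ k, u k ≤ v k) (T : Finset (Fin p)) :
    ∀ k, u k ≤ hyb u v T k := by
  intro k; unfold hyb; split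
  · exact huv k
  · exact le_refl _

lemma Dp_anti (f : Finset (Fin p) → ℝ)
    (hsub : ∀ A B : Finset (Fin p), f (A ∩ B) + f (A ∪ B) ≤ f A + f B)
    (i : Fin p) {u v : Fin p → ℝ}
    (hu : ∀ k, u k ∈ Set.Icc (0:ℝ) 1) (hv : ∀ k, v k ∈ Set.Icc (0:ℝ) 1)
    (huv : ∀ k, u k ≤ v k) :
    Dp f i v ≤ Dp f i u := by
  have key : ∀ T : Finset (Fin p), Dp f i (hyb u v T) ≤ Dp f i u := by
    intro T
    induction T using Finset.induction_on with
    | empty => rw [hyb_empty]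
    | insert j T hj ih =>
      by_cases hji : j = i
      · subst hji
        rw [hyb_insert u v T hj, Dp_update_self]
        exact ih
      · rw [hyb_insert u v T hj]
        have hdiff := Dp_update_sub f i j hji (hyb u v T) (u j) (v j)
        have h2 : Function.update (hyb u v T) j (u j) = hyb u v T :=
          (hyb_self_update u v T hj).symm
        have hD2 : Dp2 f i j (hyb u v T) ≤ 0 :=
          Dp2_nonpos f hsub i j hji (hyb_Icc hu hv T)
        have hvu : u j ≤ v j := huv j
        rw [h2] at hdiff
        have hnp : (v j - u j) * Dp2 f i j (hyb u v T) ≤ 0 :=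
          mul_nonpos_of_nonneg_of_nonpos (by linarith) hD2
        linarith
  have := key Finset.univ
  rwa [hyb_univ] at this

lemma ML_mono (f : Finset (Fin p) → ℝ)
    (hmono : ∀ A B : Finset (Fin p), A ⊆ B → f A ≤ f B)
    {u v : Fin p → ℝ}
    (hu : ∀ k, u k ∈ Set.Icc (0:ℝ) 1) (hv : ∀ k, v k ∈ Set.Icc (0:ℝ) 1)
    (huv : ∀ k, u k ≤ v k) :
    ML f u ≤ ML f v := by
  have key : ∀ T : Finset (Fin p), ML f u ≤ ML f (hyb u v T) := by
    intro T
    induction T using Finset.induction_on with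
    | empty => rw [hyb_empty]
    | insert j T hj ih =>
      rw [hyb_insert u v T hj]
      have hdiff := ML_update_sub f j (hyb u v T) (u j) (v j)
      have h2 : Function.update (hyb u v T) j (u j) = hyb u v T :=
        (hyb_self_update u v T hj).symm
      rw [h2] at hdiff
      have hD : 0 ≤ Dp f j (hyb u v T) := Dp_nonneg f hmono j (hyb_Icc hu hv T)
      have hvu : u j ≤ v j := huv j
      have hnn : 0 ≤ (v j - u j) * Dp f j (hyb u v T) := mul_nonneg (by linarith) hD
      linarith
  have := key Finset.univ
  rwa [hyb_univ] at this

lemma ML_telescope (f : Finset (Fin p) → ℝ)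
    (hsub : ∀ A B : Finset (Fin p), f (A ∩ B) + f (A ∪ B) ≤ f A + f B)
    {x z : Fin p → ℝ}
    (hx : ∀ k, x k ∈ Set.Icc (0:ℝ) 1) (hz : ∀ k, z k ∈ Set.Icc (0:ℝ) 1)
    (hxz : ∀ k, x k ≤ z k) :
    ML f z - ML f x ≤ ∑ i, (z i - x i) * Dp f i x := by
  have key : ∀ T : Finset (Fin p),
      ML f (hyb x z T) - ML f x ≤ ∑ i ∈ T, (z i - x i) * Dp f i x := by
    intro T
    induction T using Finset.induction_on with
    | empty => rw [hyb_empty]; simp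
    | insert j T hj ih =>
      rw [hyb_insert x z T hj, Finset.sum_insert hj]
      have hdiff := ML_update_sub f j (hyb x z T) (x j) (z j)
      have h2 : Function.update (hyb x z T) j (x j) = hyb x z T :=
        (hyb_self_update x z T hj).symm
      rw [h2] at hdiff
      have hanti : Dp f j (hyb x z T) ≤ Dp f j x :=
        Dp_anti f hsub j hx (hyb_Icc hx hz T) (hyb_le hxz T)
      have hjj : x j ≤ z j := hxz j
      have : (z j - x j) * Dp f j (hyb x z T) ≤ (z j - x j) * Dp f j x :=
        mul_le_mul_of_nonneg_left hanti (by linarith)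
      linarith
  have := key Finset.univ
  rwa [hyb_univ] at this

/-- coordinate projection as a CLM. -/
noncomputable def prj (k : Fin p) : EuclideanSpace ℝ (Fin p) →L[ℝ] ℝ :=
  EuclideanSpace.proj k

@[simp] lemma prj_apply (k : Fin p) (v : EuclideanSpace ℝ (Fin p)) : prj k v = v k := rfl

/-- The derivative of the multilinear extension as a map on Euclidean space. -/
lemma hasFDerivAt_ML (f : Finset (Fin p) → ℝ) (x : EuclideanSpace ℝ (Fin p)) :
    HasFDerivAt (fun z : EuclideanSpace ℝ (Fin p) => ML f (fun i => z i))
      (∑ k, Dp f k (fun i => x i) •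
        (prj k)) x := by
  classical
  -- derivative of each factor
  have hfac : ∀ (S : Finset (Fin p)) (k : Fin p),
      HasFDerivAt (fun z : EuclideanSpace ℝ (Fin p) => fac S (fun i => z i) k)
        ((if k ∈ S then (1:ℝ) else -1) •
          (prj k)) x := by
    intro S k
    by_cases hk : k ∈ S
    · simp only [fac, if_pos hk, one_smul]
      exact (prj k).hasFDerivAt
    · simp only [fac, if_neg hk]
      have h := (hasFDerivAt_const (1:ℝ) x).fun_sub (prj k).hasFDerivAt
      refine h.congr_fderiv ?_
      ext v; simp
  have hS : ∀ S : Finset (Fin p),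
      HasFDerivAt (fun z : EuclideanSpace ℝ (Fin p) =>
          f S * ∏ k, fac S (fun i => z i) k)
        (f S • ∑ k, (∏ l ∈ Finset.univ.erase k, fac S (fun i => x i) l) •
          ((if k ∈ S then (1:ℝ) else -1) •
            (prj k))) x := by
    intro S
    have hprod := HasFDerivAt.finset_prod (u := Finset.univ)
      (g := fun k (z : EuclideanSpace ℝ (Fin p)) => fac S (fun i => z i) k)
      (g' := fun k => (if k ∈ S then (1:ℝ) else -1) •
        (prj k))
      (fun k _ => hfac S k)
    have := hprod.const_mul (f S)
    exact this
  have htot : HasFDerivAt (fun z : EuclideanSpace ℝ (Fin p) => ML f (fun i => z i))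
      (∑ S : Finset (Fin p), f S • ∑ k, (∏ l ∈ Finset.univ.erase k,
        fac S (fun i => x i) l) •
        ((if k ∈ S then (1:ℝ) else -1) •
          (prj k))) x := by
    have := HasFDerivAt.fun_sum (u := (Finset.univ : Finset (Finset (Fin p))))
      (fun S _ => hS S)
    exact this
  refine htot.congr_fderiv ?_
  ext v
  simp only [ContinuousLinearMap.coe_sum', Finset.sum_apply,
    ContinuousLinearMap.coe_smul', Pi.smul_apply, prj_apply,
    smul_eq_mul]
  simp only [Finset.mul_sum]
  rw [Finset.sum_comm]
  refine Finset.sum_congr rfl fun k _ => ?_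
  unfold Dp
  rw [Finset.sum_mul]
  refine Finset.sum_congr rfl fun S _ => ?_
  ring

lemma grad_inner (f : Finset (Fin p) → ℝ) (x v : EuclideanSpace ℝ (Fin p)) :
    ⟪gradient (fun z : EuclideanSpace ℝ (Fin p) => ML f (fun i => z i)) x, v⟫
      = ∑ k, Dp f k (fun i => x i) * v k := by
  have h := hasFDerivAt_ML f x
  rw [gradient, InnerProductSpace.toDual_symm_apply, h.fderiv]
  simp only [ContinuousLinearMap.coe_sum', Finset.sum_apply,
    ContinuousLinearMap.coe_smul', Pi.smul_apply, prj_apply, smul_eq_mul]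

end Stmt5Aux

theorem stmt5 {p : ℕ} (f : Finset (Fin p) → ℝ)
    (hmono : ∀ A B : Finset (Fin p), A ⊆ B → f A ≤ f B)
    (hsub : ∀ A B : Finset (Fin p), f (A ∩ B) + f (A ∪ B) ≤ f A + f B)
    (hnorm : f ∅ = 0)
    (F : EuclideanSpace ℝ (Fin p) → ℝ)
    (hF : F = fun z : EuclideanSpace ℝ (Fin p) => multilinearExt f (fun i => z i)) :
    ∀ x y : EuclideanSpace ℝ (Fin p),
      (∀ i, x i ∈ Set.Icc (0 : ℝ) 1) → (∀ i, y i ∈ Set.Icc (0 : ℝ) 1) →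
      (⟪gradient F x, ((WithLp.equiv 2 (Fin p → ℝ)).symm (fun i => max (y i) (x i))) - x⟫ ≥
        F ((WithLp.equiv 2 (Fin p → ℝ)).symm (fun i => max (y i) (x i))) - F x) ∧
      (⟪gradient F x, y⟫ ≥
        F ((WithLp.equiv 2 (Fin p → ℝ)).symm (fun i => max (y i) (x i))) - F x) ∧
      (F ((WithLp.equiv 2 (Fin p → ℝ)).symm (fun i => max (y i) (x i))) - F x ≥
        F y - F x) := by
  classical
  open Stmt5Aux in
  have hF' : F = fun z : EuclideanSpace ℝ (Fin p) => Stmt5Aux.ML f (fun i => z i) := by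
    rw [hF]; funext z; exact Stmt5Aux.ML_eq f _
  subst hF'
  intro x y hx hy
  set z : EuclideanSpace ℝ (Fin p) :=
    (WithLp.equiv 2 (Fin p → ℝ)).symm (fun i => max (y i) (x i)) with hzdef
  have hzco : ∀ i, z i = max (y i) (x i) := fun i => rfl
  have hzIcc : ∀ i, z i ∈ Set.Icc (0:ℝ) 1 := by
    intro i
    rw [hzco]
    constructor
    · exact le_max_of_le_right (hx i).1
    · exact max_le (hy i).2 (hx i).2
  have hxz : ∀ i, x i ≤ z i := fun i => by rw [hzco]; exact le_max_right _ _
  have hyz : ∀ i, y i ≤ z i := fun i => by rw [hzco]; exact le_max_left _ _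
  have htel := Stmt5Aux.ML_telescope f hsub hx hzIcc hxz
  have hDnn : ∀ k, 0 ≤ Stmt5Aux.Dp f k (fun i => x i) :=
    fun k => Stmt5Aux.Dp_nonneg f hmono k hx
  refine ⟨?_, ?_, ?_⟩
  · rw [Stmt5Aux.grad_inner f x (z - x)]
    have hco : ∀ k, (z - x) k = z k - x k := fun k => rfl
    calc Stmt5Aux.ML f (fun i => z i) - Stmt5Aux.ML f (fun i => x i)
        ≤ ∑ k, (z k - x k) * Stmt5Aux.Dp f k (fun i => x i) := htel
      _ = ∑ k, Stmt5Aux.Dp f k (fun i => x i) * (z - x) k := by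
          refine Finset.sum_congr rfl fun k _ => ?_
          rw [hco]; ring
  · rw [Stmt5Aux.grad_inner f x y]
    calc Stmt5Aux.ML f (fun i => z i) - Stmt5Aux.ML f (fun i => x i)
        ≤ ∑ k, (z k - x k) * Stmt5Aux.Dp f k (fun i => x i) := htel
      _ ≤ ∑ k, y k * Stmt5Aux.Dp f k (fun i => x i) := by
          refine Finset.sum_le_sum fun k _ => ?_
          refine mul_le_mul_of_nonneg_right ?_ (hDnn k)
          rw [hzco]
          rcases max_cases (y k) (x k) with ⟨h1, _⟩ | ⟨h1, _⟩ <;> rw [h1]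
          · linarith [(hx k).1]
          · linarith [(hy k).1]
      _ = ∑ k, Stmt5Aux.Dp f k (fun i => x i) * y k := by
          refine Finset.sum_congr rfl fun k _ => ?_; ring
  · have := Stmt5Aux.ML_mono f hmono hy hzIcc hyz
    linarith
end

section
/- Consider vectors y₁ᵗ, …, yₙᵗ ∈ ℝ^p generated by the update yᵢᵗ = Σⱼ wᵢⱼ yⱼᵗ⁻¹ + (n/T)·vᵢᵗ with yᵢ⁰ = 0, where W = (wᵢⱼ) is symmetric doubly stochastic with ‖W^k − (1/n)1ₙ1ₙᵀ‖ ≤ β^k for all k ≥ 1 and some β ∈ [0,1), and ‖(v₁ᵗ; …; vₙᵗ)‖ ≤ D for all t. Then for every i and every t ≤ T, ‖yᵢᵗ − ȳᵗ‖ ≤ n^{3/2}·D / (T·(1−β)), where ȳᵗ = (1/n)·Σᵢ yᵢᵗ. -/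
/-!
Write `centered x` for the deviation of a family of vectors from its mean. Since `W` is doubly
stochastic, centering commutes with averaging by `W`, and on families with mean zero `W` acts as
`W - 𝟙𝟙ᵀ / n`, an operator of norm at most `β`. So the stacked consensus error `eₜ` obeys
`‖eₜ₊₁‖ ≤ β ‖eₜ‖ + (n / T) D`, and starting from `e₀ = 0` it stays below the fixed point
`n D / (T (1 - β))` of this affine recursion.
-/

open Finset WithLp

section Centering

variable {ι E : Type*} [Fintype ι]

section Algebraic

variable [AddCommGroup E] [Module ℝ E]

noncomputable def centered (x : ι → E) : ι → E :=
  fun i => x i - (Fintype.card ι : ℝ)⁻¹ • ∑ j, x j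

theorem sum_centered (x : ι → E) : ∑ i, centered x i = 0 := by
  rcases isEmpty_or_nonempty ι with hι | hι
  · simp
  · simp [centered, sum_sub_distrib, ← Nat.cast_smul_eq_nsmul ℝ, smul_smul]

theorem centered_mix {W : Matrix ι ι ℝ} (hrow : ∀ i, ∑ j, W i j = 1)
    (hcol : ∀ j, ∑ i, W i j = 1) (c : ℝ) (x u : ι → E) :
    centered (fun i => ∑ j, W i j • x j + c • u i) =
      fun i => ∑ j, W i j • centered x j + c • centered u i := by
  funext i
  have hWsum : ∑ k, ∑ j, W k j • x j = ∑ j, x j := by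
    rw [sum_comm]
    simp only [← sum_smul, hcol, one_smul]
  have hWmean : ∑ j, W i j • ((Fintype.card ι : ℝ)⁻¹ • ∑ k, x k) =
      (Fintype.card ι : ℝ)⁻¹ • ∑ k, x k := by
    rw [← sum_smul, hrow, one_smul]
  simp only [centered, smul_sub, sum_sub_distrib, sum_add_distrib, hWsum, hWmean, ← smul_sum]
  module

theorem sum_smul_eq_sum_sub_mean_smul (W : Matrix ι ι ℝ) {z : ι → E} (hz : ∑ j, z j = 0)
    (i : ι) : ∑ j, W i j • z j =
      ∑ j, (W - (Fintype.card ι : ℝ)⁻¹ • Matrix.of fun _ _ => 1 : Matrix ι ι ℝ) i j • z j := by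
  simp [sub_smul, sum_sub_distrib, ← smul_sum, hz]

end Algebraic

variable [NormedAddCommGroup E] [InnerProductSpace ℝ E]

theorem sum_norm_centered_sq_le (x : ι → E) :
    ∑ i, ‖centered x i‖ ^ 2 ≤ ∑ i, ‖x i‖ ^ 2 := by
  rcases isEmpty_or_nonempty ι with hι | hι
  · simp
  set m : E := (Fintype.card ι : ℝ)⁻¹ • ∑ j, x j
  have hsum : ∑ j, x j = (Fintype.card ι : ℝ) • m := by
    rw [smul_smul, mul_inv_cancel₀ (Nat.cast_ne_zero.mpr Fintype.card_ne_zero), one_smul]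
  have hexpand : ∑ i, ‖centered x i‖ ^ 2 = ∑ i, ‖x i‖ ^ 2 - Fintype.card ι * ‖m‖ ^ 2 := by
    have hc : ∀ i, centered x i = x i - m := fun i => rfl
    simp only [hc, norm_sub_sq_real, sum_add_distrib, sum_sub_distrib, ← mul_sum,
      ← sum_inner, hsum, real_inner_smul_left, real_inner_self_eq_norm_sq, sum_const, card_univ,
      nsmul_eq_mul]
    ring
  rw [hexpand]
  have : 0 ≤ (Fintype.card ι : ℝ) * ‖m‖ ^ 2 := by positivity
  linarith

theorem norm_toLp_centered_le (x : ι → E) : ‖toLp 2 (centered x)‖ ≤ ‖toLp 2 x‖ := by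
  rw [PiLp.norm_eq_of_L2, PiLp.norm_eq_of_L2]
  exact Real.sqrt_le_sqrt (sum_norm_centered_sq_le x)

end Centering

section Mixing

variable {ι κ : Type*} [Fintype ι] [Fintype κ]

theorem sum_norm_sq_eq_sum_norm_column_sq (x : ι → EuclideanSpace ℝ κ) :
    ∑ i, ‖x i‖ ^ 2 = ∑ k, ‖(toLp 2 fun i => x i k : EuclideanSpace ℝ ι)‖ ^ 2 := by
  simp only [EuclideanSpace.real_norm_sq_eq]
  exact sum_comm

theorem norm_toLp_sum_smul_le [DecidableEq ι] (M : Matrix ι ι ℝ) (x : ι → EuclideanSpace ℝ κ) :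
    ‖toLp 2 fun i => ∑ j, M i j • x j‖ ≤
      ‖Matrix.toEuclideanCLM (n := ι) (𝕜 := ℝ) M‖ * ‖toLp 2 x‖ := by
  have hcol : ∀ k, (toLp 2 fun i => (∑ j, M i j • x j) k : EuclideanSpace ℝ ι) =
      Matrix.toEuclideanCLM (n := ι) (𝕜 := ℝ) M (toLp 2 fun i => x i k) := by
    intro k
    ext i
    simp [Matrix.mulVec, dotProduct]
  refine (pow_le_pow_iff_left₀ (norm_nonneg _) (by positivity) two_ne_zero).1 ?_
  rw [PiLp.norm_sq_eq_of_L2, mul_pow, PiLp.norm_sq_eq_of_L2]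
  rw [sum_norm_sq_eq_sum_norm_column_sq (fun i => ∑ j, M i j • x j),
    sum_norm_sq_eq_sum_norm_column_sq x, mul_sum]
  gcongr with k
  rw [hcol, ← mul_pow]
  exact pow_le_pow_left₀ (norm_nonneg _) (ContinuousLinearMap.le_opNorm _ _) 2

theorem norm_toLp_centered_mix_le [DecidableEq ι]
    {W : Matrix ι ι ℝ} (hrow : ∀ i, ∑ j, W i j = 1) (hcol : ∀ j, ∑ i, W i j = 1) {β : ℝ}
    (hW : ‖Matrix.toEuclideanCLM (n := ι) (𝕜 := ℝ)
      (W - (Fintype.card ι : ℝ)⁻¹ • Matrix.of fun _ _ => (1 : ℝ))‖ ≤ β)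
    {c : ℝ} (hc : 0 ≤ c) (x u : ι → EuclideanSpace ℝ κ) :
    ‖toLp 2 (centered fun i => ∑ j, W i j • x j + c • u i)‖ ≤
      β * ‖toLp 2 (centered x)‖ + c * ‖toLp 2 u‖ := by
  set M : Matrix ι ι ℝ := W - (Fintype.card ι : ℝ)⁻¹ • Matrix.of fun _ _ => (1 : ℝ)
  have hsplit : toLp 2 (centered fun i => ∑ j, W i j • x j + c • u i) =
      (toLp 2 fun i => ∑ j, M i j • centered x j) + c • toLp 2 (centered u) := by
    rw [centered_mix hrow hcol]
    ext i
    simp [sum_smul_eq_sum_sub_mean_smul W (sum_centered x), M]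
  calc _ ≤ ‖toLp 2 fun i => ∑ j, M i j • centered x j‖ + c * ‖toLp 2 (centered u)‖ := by
        rw [hsplit]
        refine (norm_add_le _ _).trans_eq ?_
        rw [norm_smul, Real.norm_of_nonneg hc]
    _ ≤ β * ‖toLp 2 (centered x)‖ + c * ‖toLp 2 u‖ := by
        gcongr
        · exact (norm_toLp_sum_smul_le M _).trans (by gcongr)
        · exact norm_toLp_centered_le u

end Mixing

theorem le_of_le_mul_add_of_fixedPoint {a : ℕ → ℝ} {β b B : ℝ} (hβ : 0 ≤ β) (h0 : a 0 ≤ B)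
    (hB : β * B + b ≤ B) (hstep : ∀ t, a (t + 1) ≤ β * a t + b) (t : ℕ) : a t ≤ B := by
  induction t with
  | zero => exact h0
  | succ t ih => nlinarith [hstep t]

theorem stmt7_general {n p : ℕ} (hn : 0 < n) (T : ℕ)
    (W : Matrix (Fin n) (Fin n) ℝ)
    (hrow : ∀ i, ∑ j, W i j = 1)
    (hcol : ∀ j, ∑ i, W i j = 1)
    (β : ℝ) (hβ0 : 0 ≤ β) (hβ1 : β < 1)
    (hWnorm : ∀ k : ℕ, 1 ≤ k →
      ‖Matrix.toEuclideanCLM (n := Fin n) (𝕜 := ℝ)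
        (W ^ k - (n : ℝ)⁻¹ • Matrix.of (fun _ _ => (1 : ℝ)))‖ ≤ β ^ k)
    (D : ℝ)
    (y v : ℕ → Fin n → EuclideanSpace ℝ (Fin p))
    (hy0 : ∀ i, y 0 i = 0)
    (hupd : ∀ t : ℕ, ∀ i, y (t + 1) i =
      (∑ j, W i j • y t j) + ((n : ℝ) / (T : ℝ)) • v (t + 1) i)
    (hv : ∀ t : ℕ, 1 ≤ t → Real.sqrt (∑ i, ‖v t i‖ ^ 2) ≤ D) :
    ∀ t ≤ T, ∀ i,
      ‖y t i - (n : ℝ)⁻¹ • ∑ j, y t j‖ ≤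
        (n : ℝ) ^ ((3 : ℝ) / 2) * D / ((T : ℝ) * (1 - β)) := by
  intro t _ i
  have hD : 0 ≤ D := (Real.sqrt_nonneg _).trans (hv 1 le_rfl)
  have h1β : 0 < 1 - β := sub_pos.2 hβ1
  have hW : ‖Matrix.toEuclideanCLM (n := Fin n) (𝕜 := ℝ)
      (W - (Fintype.card (Fin n) : ℝ)⁻¹ • Matrix.of fun _ _ => (1 : ℝ))‖ ≤ β := by
    simpa using hWnorm 1 le_rfl
  have hbound : ∀ t, ‖toLp 2 (centered (y t))‖ ≤ (n / T) * D / (1 - β) := by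
    refine le_of_le_mul_add_of_fixedPoint (b := n / T * D) hβ0 ?_ (le_of_eq ?_) fun t => ?_
    · have hc0 : centered (y 0) = 0 := funext fun i => by simp [centered, hy0]
      show ‖toLp 2 (centered (y 0))‖ ≤ _
      rw [hc0, toLp_zero, norm_zero]
      positivity
    · field_simp
      ring
    · rw [show y (t + 1) = _ from funext (hupd t)]
      refine (norm_toLp_centered_mix_le hrow hcol hW (by positivity) _ _).trans ?_
      gcongr
      rw [PiLp.norm_eq_of_L2]
      exact hv (t + 1) t.succ_pos
  calc ‖y t i - (n : ℝ)⁻¹ • ∑ j, y t j‖ = ‖centered (y t) i‖ := by simp [centered]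
    _ ≤ ‖toLp 2 (centered (y t))‖ := PiLp.norm_apply_le (toLp 2 (centered (y t))) i
    _ ≤ (n / T) * D / (1 - β) := hbound t
    _ = n * D / (T * (1 - β)) := by rw [← div_div]; ring
    _ ≤ (n : ℝ) ^ ((3 : ℝ) / 2) * D / ((T : ℝ) * (1 - β)) := by
        gcongr
        exact Real.self_le_rpow_of_one_le (by exact_mod_cast hn) (by norm_num)

theorem stmt7 {n p : ℕ} (hn : 0 < n) (T : ℕ) (hT : 0 < T)
    (W : Matrix (Fin n) (Fin n) ℝ)
    (hsymm : W.IsSymm)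
    (hnonneg : ∀ i j, 0 ≤ W i j)
    (hrow : ∀ i, ∑ j, W i j = 1)
    (hcol : ∀ j, ∑ i, W i j = 1)
    (β : ℝ) (hβ0 : 0 ≤ β) (hβ1 : β < 1)
    (hWnorm : ∀ k : ℕ, 1 ≤ k →
      ‖Matrix.toEuclideanCLM (n := Fin n) (𝕜 := ℝ)
        (W ^ k - (n : ℝ)⁻¹ • Matrix.of (fun _ _ => (1 : ℝ)))‖ ≤ β ^ k)
    (D : ℝ)
    (y v : ℕ → Fin n → EuclideanSpace ℝ (Fin p))
    (hy0 : ∀ i, y 0 i = 0)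
    (hupd : ∀ t : ℕ, ∀ i, y (t + 1) i =
      (∑ j, W i j • y t j) + ((n : ℝ) / (T : ℝ)) • v (t + 1) i)
    (hv : ∀ t : ℕ, 1 ≤ t → Real.sqrt (∑ i, ‖v t i‖ ^ 2) ≤ D) :
    ∀ t ≤ T, ∀ i,
      ‖y t i - (n : ℝ)⁻¹ • ∑ j, y t j‖ ≤
        (n : ℝ) ^ ((3 : ℝ) / 2) * D / ((T : ℝ) * (1 - β)) :=
  stmt7_general hn T W hrow hcol β hβ0 hβ1 hWnorm D y v hy0 hupd hv
end
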